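/- arXiv:1508.07295 — 4 statements merged into one kernel-verified Lean document; each statement's English description precedes it below -/
import Mathlib

section
/- Let L be a field of prime characteristic p, K ⊆ L a subfield, and e ≥ 1. Suppose φ : L → L is a p^{−e}-linear map such that φ(K) ⊆ K and the restriction φ|_K is not identically zero. Then every element of L that is algebraic over K is separable over K. (Corollary: for a log canonical place E over an F-pure center W, where the map φ_E on K(E) restricts to a nonzero map φ_W on K(W), the algebraic closure of K(W) in K(E) is separable over K(W).) -/
/-!
If `φ` is `p^{-e}`-linear, maps `K` into `K` and is nonzero on `K`, then `x ↦ x ^ p ^ e` preserves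
`K`-linear independence: multiplying a relation `∑ cⱼ • vⱼ ^ p ^ e = 0` by `t ∈ K` and applying `φ`
gives the relation `∑ φ (cⱼ t) • vⱼ = 0` with coefficients in `K`, so every `φ (cⱼ t)` vanishes,
and `t = cᵢ⁻¹ k` with `φ k ≠ 0` forces `cᵢ = 0`. If `α` were inseparable of degree `n`, its minimal
polynomial would be `g (X ^ p)` with `deg g < n`, so `1, α, …, α ^ (n - 1)` are independent while
their `p`-th powers are not; as independence of `p ^ e`-th powers implies independence of `p`-th
powers (apply Frobenius), this contradicts the first step.
-/

open Polynomial

theorem LinearIndependent.pow_of_invPowLinear {K L : Type*} [Field K] [Field L] [Algebra K L]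
    {q : ℕ} (φ : L →+ L)
    (hφ : ∀ a b : L, φ (a ^ q * b) = a * φ b)
    (hK : ∀ k : K, φ (algebraMap K L k) ∈ Set.range (algebraMap K L))
    (hnz : ∃ k : K, φ (algebraMap K L k) ≠ 0)
    {ι : Type*} {v : ι → L} (hv : LinearIndependent K v) : LinearIndependent K (v · ^ q) := by
  rw [linearIndependent_iff'] at hv ⊢
  intro s c hc i hi
  by_contra hci
  obtain ⟨k, hk⟩ := hnz
  obtain ⟨t, rfl⟩ : ∃ t, c i * t = k := ⟨(c i)⁻¹ * k, mul_inv_cancel_left₀ hci k⟩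
  choose d hd using fun j => hK (c j * t)
  have hrel : ∑ j ∈ s, d j • v j = 0 := by
    have := congrArg (fun x => φ (algebraMap K L t * x)) hc
    simp only [Finset.mul_sum, map_sum, mul_zero, map_zero] at this
    rw [← this]
    refine Finset.sum_congr rfl fun j _ => ?_
    rw [Algebra.smul_def, Algebra.smul_def, hd, mul_comm,
      show algebraMap K L t * (algebraMap K L (c j) * v j ^ q)
        = v j ^ q * algebraMap K L (c j * t) by rw [map_mul]; ring, hφ]
  apply hk
  rw [← hd i, hv s d hrel i hi, map_zero]

theorem LinearIndependent.of_pow_expChar_pow {K L : Type*} [Field K] [CommRing L] [Algebra K L]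
    (p n : ℕ) [ExpChar L p] {ι : Type*} {v : ι → L}
    (hv : LinearIndependent K (v · ^ p ^ n)) : LinearIndependent K v := by
  rw [linearIndependent_iff'] at hv ⊢
  intro s c hc i hi
  have hpow : ∑ j ∈ s, c j ^ p ^ n • v j ^ p ^ n = 0 := by
    simpa only [sum_pow_char_pow, _root_.smul_pow, zero_pow (expChar_pow_pos L p n).ne']
      using congrArg (· ^ p ^ n) hc
  exact pow_eq_zero_iff (expChar_pow_pos L p n).ne' |>.mp (hv s _ hpow i hi)

theorem not_linearIndependent_pow_pow_of_not_isSeparable {K L : Type*} [Field K] [Field L]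
    [Algebra K L] (p : ℕ) [CharP K p] {α : L} (hint : IsIntegral K α) (hsep : ¬IsSeparable K α) :
    ¬LinearIndependent K fun i : Fin (minpoly K α).natDegree => (α ^ (i : ℕ)) ^ p := by
  obtain ⟨-, g, hg, hgf⟩ := (separable_or p (minpoly.irreducible hint)).resolve_left hsep
  have hroot : aeval (α ^ p) g = 0 := by rw [← expand_aeval, hgf, minpoly.aeval]
  have hdeg : g.natDegree < (minpoly K α).natDegree := by
    have hn := minpoly.natDegree_pos hint
    rw [← hgf, natDegree_expand] at hn ⊢
    have hp0 : p ≠ 0 := by rintro rfl; simp at hn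
    have hp1 := CharP.char_ne_one K p
    exact lt_mul_right hg.natDegree_pos (by omega)
  rw [Fintype.linearIndependent_iff]
  push Not
  refine ⟨fun i => g.coeff i, ?_, ⟨g.natDegree, hdeg⟩, ?_⟩
  · rw [← hroot, aeval_eq_sum_range' hdeg, ← Fin.sum_univ_eq_sum_range]
    simp only [← pow_mul, mul_comm]
  · exact leadingCoeff_ne_zero.mpr hg.ne_zero

/-- Let `L` be a field of prime characteristic `p`, `K ⊆ L` a
subfield (given as an algebra `K → L`), and `e ≥ 1`.  Suppose `φ : L → L` is a
`p^{-e}`-linear map (additive and `φ (a^{p^e} * b) = a * φ b`) with `φ(K) ⊆ K` and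
whose restriction to `K` is not identically zero.  Then every element of `L` that is
algebraic over `K` is separable over `K`. -/
theorem stmt_1 {p : ℕ} (hp : p.Prime) {e : ℕ} (he : 1 ≤ e)
    {K L : Type*} [Field K] [Field L] [Algebra K L] [CharP L p]
    (φ : L → L)
    (hadd : ∀ a b : L, φ (a + b) = φ a + φ b)
    (hsemi : ∀ a b : L, φ (a ^ p ^ e * b) = a * φ b)
    (hK : ∀ k : K, φ (algebraMap K L k) ∈ Set.range (algebraMap K L))
    (hnz : ∃ k : K, φ (algebraMap K L k) ≠ 0) :
    ∀ α : L, IsAlgebraic K α → IsSeparable K α := by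
  intro α halg
  by_contra hsep
  have : CharP K p := (algebraMap K L).charP (algebraMap K L).injective p
  have : ExpChar L p := ExpChar.prime hp
  obtain ⟨e, rfl⟩ : ∃ e', e = e' + 1 := ⟨e - 1, by omega⟩
  have hpow := (linearIndependent_pow α).pow_of_invPowLinear (AddMonoidHom.mk' φ hadd) hsemi hK hnz
  refine not_linearIndependent_pow_pow_of_not_isSeparable p halg.isIntegral hsep
    (LinearIndependent.of_pow_expChar_pow p e ?_)
  simpa only [← pow_mul, pow_succ', mul_assoc] using hpow
end

section
/- Let L be a field of prime characteristic p, K ⊆ L a subfield, and e ≥ 1. Suppose φ : L → L is a p^{−e}-linear map such that φ(K) ⊆ K. Let M be an intermediate field K ⊆ M ⊆ L such that M is algebraic and separable over K. Then φ(M) ⊆ M; in other words, φ restricts to a p^{−e}-linear map φ_M : M → M that extends φ|_K and is extended by φ. -/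
/-!
A separable element `x` generates the same field as `x ^ p ^ e`, so `x = f (x ^ p ^ e)` for a
polynomial `f` over `K`. Then `p^{-e}`-linearity gives `φ x = ∑ᵢ xⁱ φ(fᵢ)`, which lies in `M`
because `φ` maps `K` into `K`.
-/

open Polynomial IntermediateField

theorem IsSeparable.exists_aeval_pow_expChar_pow_eq {K L : Type*} [Field K] [Field L]
    [Algebra K L] {x : L} (hx : IsSeparable K x) (q : ℕ) [ExpChar K q] (n : ℕ) :
    ∃ f : K[X], aeval (x ^ q ^ n) f = x := by
  have hmem : x ∈ K⟮x ^ q ^ n⟯ :=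
    adjoin_simple_eq_adjoin_pow_expChar_pow_of_isSeparable K L hx q n ▸ mem_adjoin_simple_self K x
  rwa [← mem_toSubalgebra,
    adjoin_simple_toSubalgebra_of_isAlgebraic (hx.isIntegral.pow _).isAlgebraic,
    Algebra.adjoin_singleton_eq_range_aeval] at hmem

theorem AddMonoidHom.map_aeval_pow_mem {R A : Type*} [CommSemiring R] [CommSemiring A]
    [Algebra R A] (S : Subsemiring A) {q : ℕ} (φ : A →+ A)
    (hsemi : ∀ a b : A, φ (a ^ q * b) = a * φ b) (hR : ∀ r : R, φ (algebraMap R A r) ∈ S)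
    {y : A} (hy : y ∈ S) (f : R[X]) : φ (aeval (y ^ q) f) ∈ S := by
  induction f using Polynomial.induction_on' with
  | add f g hf hg => simpa only [map_add] using add_mem hf hg
  | monomial i r =>
    rw [aeval_monomial, ← pow_right_comm, mul_comm, hsemi]
    exact mul_mem (pow_mem hy i) (hR r)

theorem stmt_2_general {p : ℕ} (hp : p.Prime) {e : ℕ}
    {K L : Type*} [Field K] [Field L] [Algebra K L] [CharP L p]
    (φ : L → L)
    (hadd : ∀ a b : L, φ (a + b) = φ a + φ b)
    (hsemi : ∀ a b : L, φ (a ^ p ^ e * b) = a * φ b)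
    (hK : ∀ k : K, φ (algebraMap K L k) ∈ Set.range (algebraMap K L))
    (M : IntermediateField K L)
    (hsep : ∀ x : L, x ∈ M → IsSeparable K x) :
    ∀ x : L, x ∈ M → φ x ∈ M := by
  intro x hx
  have : ExpChar L p := .prime hp
  have : ExpChar K p := (algebraMap K L).expChar (algebraMap K L).injective p
  obtain ⟨f, hf⟩ := (hsep x hx).exists_aeval_pow_expChar_pow_eq p e
  have hKM (k : K) : φ (algebraMap K L k) ∈ M := by
    obtain ⟨k', hk'⟩ := hK k
    exact hk' ▸ M.algebraMap_mem k'
  rw [← hf]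
  exact (AddMonoidHom.mk' φ hadd).map_aeval_pow_mem M.toSubalgebra.toSubsemiring hsemi hKM hx f

/-- Let `L` be a field of prime characteristic `p`, `K ⊆ L` a
subfield, and `e ≥ 1`.  Suppose `φ : L → L` is a `p^{-e}`-linear map with
`φ(K) ⊆ K`.  Let `M` be an intermediate field `K ⊆ M ⊆ L` which is algebraic and
separable over `K`.  Then `φ(M) ⊆ M`, i.e. `φ` restricts to a `p^{-e}`-linear map on
`M` extending `φ|_K` and extended by `φ`. -/
theorem stmt_2 {p : ℕ} (hp : p.Prime) {e : ℕ} (he : 1 ≤ e)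
    {K L : Type*} [Field K] [Field L] [Algebra K L] [CharP L p]
    (φ : L → L)
    (hadd : ∀ a b : L, φ (a + b) = φ a + φ b)
    (hsemi : ∀ a b : L, φ (a ^ p ^ e * b) = a * φ b)
    (hK : ∀ k : K, φ (algebraMap K L k) ∈ Set.range (algebraMap K L))
    (M : IntermediateField K L)
    (halg : ∀ x : L, x ∈ M → IsAlgebraic K x)
    (hsep : ∀ x : L, x ∈ M → IsSeparable K x) :
    ∀ x : L, x ∈ M → φ x ∈ M :=
  stmt_2_general hp φ hadd hsemi hK M hsep
end

section
/- Let (R, m) be a local commutative ring of prime characteristic p, let e ≥ 1, and let φ : R → R be a p^{−e}-linear map, with iterates φ^[n] (which are p^{−ne}-linear, and carry ideals of R to ideals of R). Let c ≥ 0 be a rational number, and suppose that for every rational c' > c and every integer n ≥ 1 one has φ^[n](m^{⌈c'(p^{ne}−1)⌉}) ⊆ m (i.e., c is at least the F-pure threshold: no perturbation above c admits a splitting). Then for every f ∈ m, every rational t > 0, and every integer n ≥ 1, one has φ^[n]( f^{⌈t(p^{ne}−1)⌉} · m^{⌈c(p^{ne}−1)⌉} ) ⊆ m. (This is the ring-theoretic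 core of the paper's Lemma: if (X, Δ, m^c) is sharply F-pure with c the F-pure threshold, then for any divisor Δ' > Δ the triple (X, Δ', m^c) is not sharply F-pure.) -/
/-- ring-theoretic core of Lemma 6.1: one cannot enlarge the divisor
at the F-pure threshold.  Let `(R, m)` be a local ring of prime characteristic `p`,
`e ≥ 1`, and `φ : R → R` a `p^{-e}`-linear map with iterates `φ^[n]`.  Let `c ≥ 0` be
rational and suppose that for every rational `c' > c` and every `n ≥ 1` one has
`φ^[n] (m^{⌈c'(p^{ne}-1)⌉}) ⊆ m`.  Then for every `f ∈ m`, every rational `t > 0`,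
and every `n ≥ 1`, one has `φ^[n] (f^{⌈t(p^{ne}-1)⌉} · m^{⌈c(p^{ne}-1)⌉}) ⊆ m`. -/
theorem stmt_7 {p : ℕ} (hp : p.Prime) {e : ℕ} (he : 1 ≤ e)
    {R : Type*} [CommRing R] [IsLocalRing R] [CharP R p]
    (φ : R → R)
    (hadd : ∀ a b : R, φ (a + b) = φ a + φ b)
    (hsemi : ∀ a b : R, φ (a ^ p ^ e * b) = a * φ b)
    (c : ℚ) (hc : 0 ≤ c)
    (hthresh : ∀ c' : ℚ, c < c' → ∀ n : ℕ, 1 ≤ n →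
      ∀ x ∈ (IsLocalRing.maximalIdeal R) ^ (⌈c' * ((p : ℚ) ^ (n * e) - 1)⌉.toNat),
        φ^[n] x ∈ IsLocalRing.maximalIdeal R) :
    ∀ f ∈ IsLocalRing.maximalIdeal R, ∀ t : ℚ, 0 < t → ∀ n : ℕ, 1 ≤ n →
      ∀ x ∈ (IsLocalRing.maximalIdeal R) ^ (⌈c * ((p : ℚ) ^ (n * e) - 1)⌉.toNat),
        φ^[n] (f ^ (⌈t * ((p : ℚ) ^ (n * e) - 1)⌉.toNat) * x) ∈ IsLocalRing.maximalIdeal R := by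
  intro f hf t ht n hn x hx
  set a : ℚ := (p : ℚ) ^ (n * e) - 1 with ha
  have key : ⌈(c + t) * a⌉.toNat ≤ ⌈t * a⌉.toNat + ⌈c * a⌉.toNat := by
    calc ⌈(c + t) * a⌉.toNat = (⌈c * a + t * a⌉).toNat := by rw [add_mul]
    _ ≤ (⌈c * a⌉ + ⌈t * a⌉).toNat := Int.toNat_le_toNat (Int.ceil_add_le _ _)
    _ ≤ ⌈c * a⌉.toNat + ⌈t * a⌉.toNat := by omega
    _ = _ := Nat.add_comm _ _
  apply hthresh (c + t) (by linarith) n hn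
  apply Ideal.pow_le_pow_right key
  rw [pow_add]
  exact Ideal.mul_mem_mul (Ideal.pow_mem_pow hf _) hx
end

section
/- Let p be an odd prime and consider the polynomial a = z·y² − x·(x−z)·(x−t·z) in the polynomial ring 𝔽_p[x, y, z, t] (the defining equation of the family of cones over the cubic curves y²z = x(x−z)(x−tz)). Then there exists a unique polynomial h ∈ 𝔽_p[t] such that a^{p−1} − h·x^{p−1}·y^{p−1}·z^{p−1} lies in the ideal (x^p, y^p, z^p) ⊆ 𝔽_p[x, y, z, t], and this h is nonzero; in particular a^{p−1} ∉ (x^p, y^p, z^p). (By Fedder's criterion this is the paper's assertion that the hypersurface X = {a = 0} is F-pure at the generic point of the section Z = V(x, y, z), and h is the Hasse polynomial appearing in the computation of the F-different in Example 3.2.) -/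
open MvPolynomial

/-!
With `t` of weight `0`, `a` is homogeneous of degree `3` in `x, y, z`, so every monomial of
`a^{p-1}` has `x, y, z`-degree `3(p-1)`. Such a monomial lies outside `(x^p, y^p, z^p)` only if it
is `(xyz)^{p-1} t^l`; hence `a^{p-1}` is congruent to `h(t) (xyz)^{p-1}` for exactly one `h`,
the coefficient of `(xyz)^{p-1}` in `a^{p-1}` read as a polynomial in `t`.
Its constant term is the coefficient of `(xyz)^{p-1}` in `(z(x² + y²) − x³)^{p-1}` (set `t = 0`).
Counting powers of `z`, only `(z(x² + y²))^{p-1}` contributes, which gives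
`binom(p-1, (p-1)/2)`, a unit modulo `p`.
-/

/-- The defining equation `a = z y² − x (x − z)(x − t z)` of the family of cones over
the cubic curves `y² z = x (x − z)(x − t z)`, in `𝔽_p[x, y, z, t]`, with the
variables `x, y, z, t` being `X 0, X 1, X 2, X 3`. -/
noncomputable def stmt8poly (p : ℕ) : MvPolynomial (Fin 4) (ZMod p) :=
  X 2 * X 1 ^ 2 - X 0 * (X 0 - X 2) * (X 0 - X 3 * X 2)

/-- The ideal `(x^p, y^p, z^p) ⊆ 𝔽_p[x, y, z, t]`. -/
noncomputable def stmt8ideal (p : ℕ) : Ideal (MvPolynomial (Fin 4) (ZMod p)) :=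
  Ideal.span {X 0 ^ p, X 1 ^ p, X 2 ^ p}

/-- The condition that `a^{p−1} − h(t)·x^{p−1} y^{p−1} z^{p−1} ∈ (x^p, y^p, z^p)` for
a polynomial `h ∈ 𝔽_p[t]` (embedded by substituting the variable `t = X 3`). -/
def stmt8cond (p : ℕ) (h : Polynomial (ZMod p)) : Prop :=
  stmt8poly p ^ (p - 1) -
      Polynomial.aeval (X 3 : MvPolynomial (Fin 4) (ZMod p)) h *
        (X 0 ^ (p - 1) * X 1 ^ (p - 1) * X 2 ^ (p - 1))
    ∈ stmt8ideal p

variable {σ R : Type*} [CommRing R]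

theorem coeff_aeval_X [DecidableEq σ] (i : σ) (h : Polynomial R) (d : σ →₀ ℕ) :
    coeff d (Polynomial.aeval (X i : MvPolynomial σ R) h) =
      if d = Finsupp.single i (d i) then h.coeff (d i) else 0 := by
  induction h using Polynomial.induction_on' with
  | add f g hf hg =>
    simp only [map_add, coeff_add, hf, hg, Polynomial.coeff_add, ite_add_ite, add_zero]
  | monomial n c =>
    rw [Polynomial.aeval_monomial, algebraMap_eq, C_mul_X_pow_eq_monomial, coeff_monomial,
      Polynomial.coeff_monomial]
    by_cases h1 : Finsupp.single i n = d
    · subst h1; simp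
    · rw [if_neg h1]
      split_ifs with h2 h3
      · exact absurd (by rw [h3]; exact h2.symm) h1
      all_goals rfl

theorem coeff_pow_eq_of_X_dvd_sub {f g : MvPolynomial σ R} {i : σ} (hfg : X i ∣ f - g) (n : ℕ)
    {d : σ →₀ ℕ} (hd : d i = 0) : coeff d (f ^ n) = coeff d (g ^ n) := by
  classical
  obtain ⟨q, hq⟩ := hfg.trans (sub_dvd_pow_sub_pow f g n)
  rw [sub_eq_iff_eq_add'.mp hq, coeff_add, coeff_X_mul', if_neg (by simpa using hd), add_zero]

theorem coeff_X_mul_add_pow [DecidableEq σ] {i : σ} {Y W : MvPolynomial σ R}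
    (hY : Y.IsWeightedHomogeneous (Pi.single i 1) 0)
    (hW : W.IsWeightedHomogeneous (Pi.single i 1) 0) (n : ℕ) {d : σ →₀ ℕ} (hd : d i = n) :
    coeff d ((X i * Y + W) ^ n) = coeff (d - Finsupp.single i n) (Y ^ n) := by
  rw [add_pow, coeff_sum, Finset.sum_eq_single n]
  · rw [Nat.sub_self, pow_zero, mul_one, Nat.choose_self, Nat.cast_one, mul_one, mul_pow,
      X_pow_eq_monomial, coeff_monomial_mul', if_pos (by simp [hd]), one_mul]
  · intro k _ hk
    have hX : (X i : MvPolynomial σ R).IsWeightedHomogeneous (Pi.single i 1) 1 := by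
      simpa using isWeightedHomogeneous_X R (Pi.single i 1) i
    have hterm := (((hX.mul hY).pow k).mul (hW.pow (n - k))).mul
      (isWeightedHomogeneous_C (Pi.single i 1) (n.choose k : R))
    rw [map_natCast] at hterm
    exact hterm.coeff_eq_zero d (by simpa [Finsupp.weight_single_one_apply, hd] using Ne.symm hk)
  · simp

theorem coeff_sq_add_sq_pow [DecidableEq σ] {i j : σ} (hij : i ≠ j) (a b : ℕ) :
    coeff (Finsupp.single i (2 * a) + Finsupp.single j (2 * b))
      ((X i ^ 2 + X j ^ 2 : MvPolynomial σ R) ^ (a + b)) = ((a + b).choose a : R) := by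
  have hterm (k : ℕ) :
      (X i ^ 2) ^ k * (X j ^ 2) ^ (a + b - k) * ((a + b).choose k : MvPolynomial σ R) =
        monomial (Finsupp.single i (2 * k) + Finsupp.single j (2 * (a + b - k)))
          ((a + b).choose k : R) := by
    rw [← pow_mul, ← pow_mul, X_pow_eq_monomial, X_pow_eq_monomial, monomial_mul, one_mul,
      ← map_natCast C, mul_comm, C_mul_monomial, mul_one]
  simp only [add_pow, coeff_sum, hterm, coeff_monomial]
  rw [Finset.sum_eq_single a]
  · simp
  · intro k _ hk
    rw [if_neg]
    intro heq
    have hi : 2 * k = 2 * a := by simpa [hij] using congrArg (· i) heq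
    omega
  · simp

theorem mem_span_X_pow_iff {q : ℕ} {f : MvPolynomial (Fin 4) R} :
    f ∈ Ideal.span {X 0 ^ q, X 1 ^ q, X 2 ^ q} ↔
      ∀ d ∈ f.support, q ≤ d 0 ∨ q ≤ d 1 ∨ q ≤ d 2 := by
  have := mem_ideal_span_monomial_image (x := f)
    (s := {Finsupp.single 0 q, Finsupp.single 1 q, Finsupp.single 2 q})
  simpa [Set.image_insert_eq, X_pow_eq_monomial, Finsupp.single_le_iff] using this

noncomputable def xyzExp (N : ℕ) : Fin 4 →₀ ℕ :=
  Finsupp.single 0 N + Finsupp.single 1 N + Finsupp.single 2 N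

noncomputable def xyzCoeff (N : ℕ) (f : MvPolynomial (Fin 4) R) : Polynomial R :=
  Polynomial.ofFinsupp <| AddMonoidAlgebra.ofCoeff <|
    Finsupp.onFinset (f.support.image (· 3)) (fun l => coeff (Finsupp.single 3 l + xyzExp N) f)
      fun _ hl => Finset.mem_image.mpr ⟨_, mem_support_iff.mpr hl, by simp [xyzExp]⟩

theorem coeff_xyzCoeff (N l : ℕ) (f : MvPolynomial (Fin 4) R) :
    (xyzCoeff N f).coeff l = coeff (Finsupp.single 3 l + xyzExp N) f :=
  rfl

theorem X_pow_mul_X_pow_mul_X_pow (N : ℕ) :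
    (X 0 ^ N * X 1 ^ N * X 2 ^ N : MvPolynomial (Fin 4) R) = monomial (xyzExp N) 1 := by
  simp only [xyzExp, X_pow_eq_monomial, monomial_mul, mul_one]

theorem coeff_aeval_X_three_mul (N : ℕ) (h : Polynomial R) (d : Fin 4 →₀ ℕ) :
    coeff d (Polynomial.aeval (X 3) h * (X 0 ^ N * X 1 ^ N * X 2 ^ N)) =
      if d 0 = N ∧ d 1 = N ∧ d 2 = N then h.coeff (d 3) else 0 := by
  rw [X_pow_mul_X_pow_mul_X_pow, coeff_mul_monomial', coeff_aeval_X, mul_one]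
  simp only [Finsupp.le_def, Finsupp.ext_iff, Fin.forall_fin_succ, xyzExp, Finsupp.coe_add,
    Finsupp.coe_tsub, Pi.add_apply, Pi.sub_apply, Finsupp.single_apply, Fin.succ_zero_eq_one,
    Fin.succ_one_eq_two, Fin.reduceSucc, Fin.reduceEq, if_true, if_false, add_zero, zero_add,
    tsub_zero, zero_le, IsEmpty.forall_iff, and_true]
  split_ifs <;> first | rfl | omega

theorem sub_mem_span_X_pow_iff {N : ℕ} {f : MvPolynomial (Fin 4) R}
    (hf : f.IsWeightedHomogeneous ![1, 1, 1, 0] (3 * N)) (h : Polynomial R) :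
    f - Polynomial.aeval (X 3) h * (X 0 ^ N * X 1 ^ N * X 2 ^ N) ∈
        Ideal.span {X 0 ^ (N + 1), X 1 ^ (N + 1), X 2 ^ (N + 1)} ↔
      h = xyzCoeff N f := by
  rw [mem_span_X_pow_iff]
  constructor
  · intro hmem
    ext l
    have hc := mt (hmem (Finsupp.single 3 l + xyzExp N)) (by simp [xyzExp])
    rw [notMem_support_iff, coeff_sub, coeff_aeval_X_three_mul, if_pos (by simp [xyzExp]),
      sub_eq_zero] at hc
    simpa [coeff_xyzCoeff, xyzExp] using hc.symm
  · rintro rfl d hd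
    by_contra! hlt
    rw [mem_support_iff, coeff_sub, coeff_aeval_X_three_mul] at hd
    split_ifs at hd with hdiag
    · apply hd
      rw [coeff_xyzCoeff, sub_eq_zero]
      congr 1
      ext i
      fin_cases i <;> simp [xyzExp, hdiag]
    · have hdeg : d 0 + d 1 + d 2 = 3 * N := by
        simpa [Finsupp.weight_apply, Finsupp.sum_fintype, Fin.sum_univ_four]
          using hf (by simpa using hd)
      omega

theorem isWeightedHomogeneous_stmt8poly (p : ℕ) :
    (stmt8poly p).IsWeightedHomogeneous ![1, 1, 1, 0] 3 := by
  have hX (i : Fin 4) := isWeightedHomogeneous_X (ZMod p) ![1, 1, 1, 0] i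
  exact ((hX 2).mul ((hX 1).pow 2)).sub
    (((hX 0).mul ((hX 0).sub (hX 2))).mul ((hX 0).sub ((hX 3).mul (hX 2))))

theorem coeff_xyzExp_stmt8poly_pow (p m : ℕ) :
    coeff (xyzExp (2 * m)) (stmt8poly p ^ (2 * m)) = ((2 * m).choose m : ZMod p) := by
  have hY : (X 0 ^ 2 + X 1 ^ 2 : MvPolynomial (Fin 4) (ZMod p)).IsWeightedHomogeneous
      (Pi.single 2 1) 0 :=
    ((isWeightedHomogeneous_X _ _ 0).pow 2).add ((isWeightedHomogeneous_X _ _ 1).pow 2)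
  have hW : (-X 0 ^ 3 : MvPolynomial (Fin 4) (ZMod p)).IsWeightedHomogeneous
      (Pi.single 2 1) 0 :=
    ((isWeightedHomogeneous_X _ _ 0).pow 3).neg
  calc coeff (xyzExp (2 * m)) (stmt8poly p ^ (2 * m))
      = coeff (xyzExp (2 * m)) ((X 2 * (X 0 ^ 2 + X 1 ^ 2) + -X 0 ^ 3) ^ (2 * m)) :=
        coeff_pow_eq_of_X_dvd_sub (i := 3) ⟨X 0 * X 2 * (X 0 - X 2), by rw [stmt8poly]; ring⟩
          _ (by simp [xyzExp])
    _ = coeff (Finsupp.single (0 : Fin 4) (2 * m) + Finsupp.single 1 (2 * m))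
          ((X 0 ^ 2 + X 1 ^ 2) ^ (2 * m)) := by
        rw [coeff_X_mul_add_pow hY hW _ (by simp [xyzExp]), xyzExp, add_tsub_cancel_right]
    _ = _ := by
        have hchoose := coeff_sq_add_sq_pow (R := ZMod p) (by decide : (0 : Fin 4) ≠ 1) m m
        rwa [← two_mul] at hchoose

/-- Fedder's criterion computation in Example 3.2.  Let `p` be an
odd prime and `a = z y² − x (x − z)(x − t z) ∈ 𝔽_p[x, y, z, t]`.  Then there exists a
unique polynomial `h ∈ 𝔽_p[t]` with
`a^{p−1} − h·x^{p−1} y^{p−1} z^{p−1} ∈ (x^p, y^p, z^p)`, this `h` (the Hasse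
polynomial) is nonzero, and in particular `a^{p−1} ∉ (x^p, y^p, z^p)`. -/
theorem stmt_8 (p : ℕ) (hp : p.Prime) (hodd : p ≠ 2) :
    (∃! h : Polynomial (ZMod p), stmt8cond p h) ∧
    (∀ h : Polynomial (ZMod p), stmt8cond p h → h ≠ 0) ∧
    stmt8poly p ^ (p - 1) ∉ stmt8ideal p := by
  set hasse := xyzCoeff (p - 1) (stmt8poly p ^ (p - 1))
  have hcond (h : Polynomial (ZMod p)) : stmt8cond p h ↔ h = hasse := by
    have hideal : stmt8ideal p =
        Ideal.span {X 0 ^ (p - 1 + 1), X 1 ^ (p - 1 + 1), X 2 ^ (p - 1 + 1)} := by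
      rw [Nat.sub_add_cancel hp.one_le, stmt8ideal]
    have hhom := (isWeightedHomogeneous_stmt8poly p).pow (p - 1)
    rw [stmt8cond, hideal]
    exact sub_mem_span_X_pow_iff (by rwa [smul_eq_mul, mul_comm] at hhom) h
  have hasse_ne_zero : hasse ≠ 0 := by
    obtain ⟨m, hm⟩ := hp.odd_of_ne_two hodd
    have hpm : p - 1 = 2 * m := by omega
    intro h0
    have hcoeff := congrArg (Polynomial.coeff · 0) h0
    simp only [hasse, coeff_xyzCoeff, Finsupp.single_zero, zero_add, hpm,
      coeff_xyzExp_stmt8poly_pow, Polynomial.coeff_zero, ZMod.natCast_eq_zero_iff] at hcoeff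
    exact hp.coprime_iff_not_dvd.mp (hp.coprime_choose_of_lt (by omega) (by omega)) hcoeff
  refine ⟨⟨hasse, (hcond _).2 rfl, fun h hh => (hcond h).1 hh⟩,
    fun h hh => (hcond h).1 hh ▸ hasse_ne_zero, fun hmem => hasse_ne_zero ((hcond 0).1 ?_).symm⟩
  simpa [stmt8cond] using hmem
end
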